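/- arXiv:2112.11196 — 4 statements merged into one kernel-verified Lean document; each statement's English description precedes it below -/
import Mathlib

section
/- Let I = [x₀, x_N] with a uniform partition into N equal subintervals, and let f, b : I → ℝ be continuous with b agreeing with f at the endpoints. Let α = (α₁,...,α_N) and β = (β₁,...,β_N) be scale vectors with all entries of absolute value less than 1 and Σ_{i=1}^N α_i = Σ_{i=1}^N β_i. If f^α and f^β denote the α-fractal and β-fractal functions of f with base b for this partition, then ∫_{x₀}^{x_N} f^α(x) dx = ∫_{x₀}^{x_N} f^β(x) dx. -/
/-- Slope of the increasing affine map `L i` sending `[x 0, x N]` onto `[x (i-1), x i]`. -/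
noncomputable def aCoef (x : ℕ → ℝ) (N i : ℕ) : ℝ := (x i - x (i - 1)) / (x N - x 0)

/-- Intercept of `L i`. -/
noncomputable def eCoef (x : ℕ → ℝ) (N i : ℕ) : ℝ :=
  (x N * x (i - 1) - x 0 * x i) / (x N - x 0)

/-- Inverse of `L i t = aCoef * t + eCoef`. -/
noncomputable def Linv (x : ℕ → ℝ) (N i : ℕ) (t : ℝ) : ℝ :=
  (t - eCoef x N i) / aCoef x N i

/-! Integrating the self-referential equation over the `i`-th subinterval and substituting
`s = L_i⁻¹ t` gives `∫ f^γ = ∫ f + λ_γ (∫ f^γ - ∫ b)` with `λ_γ = Σ a_i γ_i`. As all `|γ_i| < 1`,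
`|λ_γ| < Σ a_i = 1`, so this linear equation determines `∫ f^γ` from `λ_γ` alone, and for the
uniform partition `λ_γ = (Σ γ_i) / N`. -/

open Finset intervalIntegral

lemma Finset.sum_Icc_one_eq_sum_range (N : ℕ) (F : ℕ → ℝ) :
    ∑ i ∈ Finset.Icc 1 N, F i = ∑ k ∈ range N, F (k + 1) := by
  rw [range_eq_Ico, sum_Ico_add' F]
  rfl

section AffinePiece

variable {x : ℕ → ℝ} {N i : ℕ}

lemma aCoef_pos (hlt : x 0 < x N) (hi : x (i - 1) < x i) : 0 < aCoef x N i :=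
  div_pos (sub_pos.2 hi) (sub_pos.2 hlt)

lemma Linv_left (hlt : x 0 < x N) (hi : x (i - 1) < x i) : Linv x N i (x (i - 1)) = x 0 := by
  have h₁ := (sub_pos.2 hlt).ne'
  have h₂ := (sub_pos.2 hi).ne'
  simp only [Linv, aCoef, eCoef]
  field_simp
  ring

lemma Linv_right (hlt : x 0 < x N) (hi : x (i - 1) < x i) : Linv x N i (x i) = x N := by
  have h₁ := (sub_pos.2 hlt).ne'
  have h₂ := (sub_pos.2 hi).ne'
  simp only [Linv, aCoef, eCoef]
  field_simp
  ring

lemma continuous_Linv : Continuous (Linv x N i) :=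
  (continuous_sub_right _).div_const _

lemma mapsTo_Linv (hlt : x 0 < x N) (hi : x (i - 1) < x i) :
    Set.MapsTo (Linv x N i) (Set.Icc (x (i - 1)) (x i)) (Set.Icc (x 0) (x N)) := by
  have hmono : Monotone (Linv x N i) := fun s t hst =>
    div_le_div_of_nonneg_right (sub_le_sub_right hst _) (aCoef_pos hlt hi).le
  intro t ht
  rw [← Linv_left hlt hi, ← Linv_right hlt hi]
  exact ⟨hmono ht.1, hmono ht.2⟩

lemma integral_comp_Linv (hlt : x 0 < x N) (hi : x (i - 1) < x i) (h : ℝ → ℝ) :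
    ∫ t in x (i - 1)..x i, h (Linv x N i t) = aCoef x N i * ∫ t in x 0..x N, h t := by
  have ha := (aCoef_pos hlt hi).ne'
  have hL : ∀ t, Linv x N i t = t / aCoef x N i - eCoef x N i / aCoef x N i := fun t =>
    sub_div _ _ _
  simp only [hL, integral_comp_div_sub h ha, smul_eq_mul]
  rw [← hL, ← hL, Linv_left hlt hi, Linv_right hlt hi]

lemma integral_piece_eq_of_selfAffine {f b g : ℝ → ℝ} {c : ℝ} (hlt : x 0 < x N)
    (hi : x (i - 1) < x i) (hsub : Set.Icc (x (i - 1)) (x i) ⊆ Set.Icc (x 0) (x N))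
    (hf : ContinuousOn f (Set.Icc (x 0) (x N))) (hb : ContinuousOn b (Set.Icc (x 0) (x N)))
    (hg : ContinuousOn g (Set.Icc (x 0) (x N)))
    (hself : ∀ t ∈ Set.Icc (x (i - 1)) (x i),
      g t = f t + c * (g (Linv x N i t) - b (Linv x N i t))) :
    ∫ t in x (i - 1)..x i, g t = (∫ t in x (i - 1)..x i, f t)
      + c * aCoef x N i * ((∫ t in x 0..x N, g t) - ∫ t in x 0..x N, b t) := by
  have hcomp : ContinuousOn (fun t => c * (g (Linv x N i t) - b (Linv x N i t)))
      (Set.Icc (x (i - 1)) (x i)) :=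
    continuousOn_const.mul <|
      (hg.comp continuous_Linv.continuousOn (mapsTo_Linv hlt hi)).sub
        (hb.comp continuous_Linv.continuousOn (mapsTo_Linv hlt hi))
  rw [integral_congr (fun t ht => hself t (by rwa [Set.uIcc_of_le hi.le] at ht)),
    integral_add ((hf.mono hsub).intervalIntegrable_of_Icc hi.le)
      (hcomp.intervalIntegrable_of_Icc hi.le),
    integral_const_mul, integral_comp_Linv hlt hi (fun s => g s - b s),
    integral_sub (hg.intervalIntegrable_of_Icc hlt.le) (hb.intervalIntegrable_of_Icc hlt.le)]
  ring

end AffinePiece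

section Partition

variable {x : ℕ → ℝ} {N : ℕ}

lemma StrictMonoOn.apply_sub_one_lt (hx : StrictMonoOn x (Set.Iic N)) {i : ℕ}
    (hi : i ∈ Icc 1 N) : x (i - 1) < x i := by
  obtain ⟨hi1, hiN⟩ := Finset.mem_Icc.1 hi
  exact hx (Set.mem_Iic.2 (by omega)) (Set.mem_Iic.2 hiN) (by omega)

lemma StrictMonoOn.Icc_subset_Icc_of_mem_Icc (hx : StrictMonoOn x (Set.Iic N)) {i : ℕ}
    (hi : i ∈ Icc 1 N) : Set.Icc (x (i - 1)) (x i) ⊆ Set.Icc (x 0) (x N) := by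
  obtain ⟨hi1, hiN⟩ := Finset.mem_Icc.1 hi
  exact Set.Icc_subset_Icc
    (hx.monotoneOn (Set.mem_Iic.2 (Nat.zero_le N)) (Set.mem_Iic.2 (by omega)) (Nat.zero_le _))
    (hx.monotoneOn (Set.mem_Iic.2 hiN) (Set.mem_Iic.2 le_rfl) hiN)

theorem integral_eq_add_mul_of_selfAffine (hx : StrictMonoOn x (Set.Iic N)) {f b g : ℝ → ℝ}
    (hf : ContinuousOn f (Set.Icc (x 0) (x N))) (hb : ContinuousOn b (Set.Icc (x 0) (x N)))
    (hg : ContinuousOn g (Set.Icc (x 0) (x N))) (γ : ℕ → ℝ)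
    (hself : ∀ i ∈ Icc 1 N, ∀ t ∈ Set.Icc (x (i - 1)) (x i),
      g t = f t + γ i * (g (Linv x N i t) - b (Linv x N i t))) :
    ∫ t in x 0..x N, g t = (∫ t in x 0..x N, f t)
      + (∑ i ∈ Icc 1 N, γ i * aCoef x N i) * ((∫ t in x 0..x N, g t) - ∫ t in x 0..x N, b t) := by
  obtain rfl | hN := N.eq_zero_or_pos
  · simp
  have hlt : x 0 < x N := hx (Set.mem_Iic.2 (Nat.zero_le N)) (Set.mem_Iic.2 le_rfl) hN
  have hmem : ∀ k < N, k + 1 ∈ Icc 1 N := fun k hk => Finset.mem_Icc.2 ⟨by omega, hk⟩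
  have hint : ∀ {h : ℝ → ℝ}, ContinuousOn h (Set.Icc (x 0) (x N)) →
      ∀ k < N, IntervalIntegrable h MeasureTheory.volume (x k) (x (k + 1)) := fun hh k hk =>
    (hh.mono (hx.Icc_subset_Icc_of_mem_Icc (hmem k hk))).intervalIntegrable_of_Icc
      (hx.apply_sub_one_lt (hmem k hk)).le
  calc ∫ t in x 0..x N, g t
      = ∑ k ∈ range N, ∫ t in x k..x (k + 1), g t :=
        (sum_integral_adjacent_intervals (hint hg)).symm
    _ = ∑ k ∈ range N, ((∫ t in x k..x (k + 1), f t) + γ (k + 1) * aCoef x N (k + 1)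
          * ((∫ t in x 0..x N, g t) - ∫ t in x 0..x N, b t)) :=
        sum_congr rfl fun k hk => integral_piece_eq_of_selfAffine hlt
          (hx.apply_sub_one_lt (hmem k (mem_range.1 hk)))
          (hx.Icc_subset_Icc_of_mem_Icc (hmem k (mem_range.1 hk))) hf hb hg
          (hself _ (hmem k (mem_range.1 hk)))
    _ = _ := by
        rw [sum_add_distrib, sum_integral_adjacent_intervals (hint hf),
          Finset.sum_Icc_one_eq_sum_range, sum_mul]

lemma sum_aCoef_eq_one (hlt : x 0 < x N) : ∑ i ∈ Icc 1 N, aCoef x N i = 1 := by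
  simp only [aCoef, ← sum_div, Finset.sum_Icc_one_eq_sum_range, Nat.add_sub_cancel,
    sum_range_sub x N]
  exact div_self (sub_pos.2 hlt).ne'

lemma abs_sum_mul_aCoef_lt_one (hx : StrictMonoOn x (Set.Iic N)) (hN : 1 ≤ N) {γ : ℕ → ℝ}
    (hγ : ∀ i ∈ Icc 1 N, |γ i| < 1) : |∑ i ∈ Icc 1 N, γ i * aCoef x N i| < 1 := by
  have hlt : x 0 < x N := hx (Set.mem_Iic.2 (Nat.zero_le N)) (Set.mem_Iic.2 le_rfl) hN
  have ha : ∀ i ∈ Icc 1 N, 0 < aCoef x N i := fun i hi => aCoef_pos hlt (hx.apply_sub_one_lt hi)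
  calc |∑ i ∈ Icc 1 N, γ i * aCoef x N i|
      ≤ ∑ i ∈ Icc 1 N, |γ i| * aCoef x N i := by
        refine (abs_sum_le_sum_abs _ _).trans (sum_le_sum fun i hi => ?_)
        rw [abs_mul, abs_of_pos (ha i hi)]
    _ < ∑ i ∈ Icc 1 N, aCoef x N i :=
        sum_lt_sum_of_nonempty (nonempty_Icc.2 hN) fun i hi =>
          mul_lt_of_lt_one_left (ha i hi) (hγ i hi)
    _ = 1 := sum_aCoef_eq_one hlt

end Partition

section Uniform

variable {x : ℕ → ℝ} {N : ℕ}

lemma strictMonoOn_of_uniform (hlt : x 0 < x N)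
    (huni : ∀ i ≤ N, x i = x 0 + i * ((x N - x 0) / N)) : StrictMonoOn x (Set.Iic N) := by
  have hN : (0 : ℝ) < N := Nat.cast_pos.2 <| Nat.pos_of_ne_zero <| by
    rintro rfl
    exact hlt.ne rfl
  have hδ : 0 < (x N - x 0) / N := div_pos (sub_pos.2 hlt) hN
  intro j hj k hk hjk
  rw [huni j hj, huni k hk]
  gcongr

lemma aCoef_of_uniform (hlt : x 0 < x N)
    (huni : ∀ i ≤ N, x i = x 0 + i * ((x N - x 0) / N)) {i : ℕ} (hi : i ∈ Icc 1 N) :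
    aCoef x N i = (N : ℝ)⁻¹ := by
  obtain ⟨hi1, hiN⟩ := Finset.mem_Icc.1 hi
  have hd := (sub_pos.2 hlt).ne'
  rw [aCoef, huni i hiN, huni (i - 1) (by omega), Nat.cast_sub hi1]
  field_simp
  ring

lemma sum_mul_aCoef_of_uniform (hlt : x 0 < x N)
    (huni : ∀ i ≤ N, x i = x 0 + i * ((x N - x 0) / N)) (γ : ℕ → ℝ) :
    ∑ i ∈ Icc 1 N, γ i * aCoef x N i = (∑ i ∈ Icc 1 N, γ i) / N := by
  rw [sum_congr rfl fun i hi => by rw [aCoef_of_uniform hlt huni hi], ← sum_mul, div_eq_mul_inv]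

end Uniform

theorem integral_eq_of_sum_scales_eq_general (N : ℕ) (hN : 1 ≤ N) (x : ℕ → ℝ)
    (hlt : x 0 < x N)
    (huni : ∀ i ≤ N, x i = x 0 + i * ((x N - x 0) / N))
    (f b fα fβ : ℝ → ℝ)
    (hf : ContinuousOn f (Set.Icc (x 0) (x N)))
    (hb : ContinuousOn b (Set.Icc (x 0) (x N)))
    (hfα : ContinuousOn fα (Set.Icc (x 0) (x N)))
    (hfβ : ContinuousOn fβ (Set.Icc (x 0) (x N)))
    (α β : ℕ → ℝ)
    (hβ : ∀ i ∈ Finset.Icc 1 N, |β i| < 1)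
    (hsum : ∑ i ∈ Finset.Icc 1 N, α i = ∑ i ∈ Finset.Icc 1 N, β i)
    (hselfα : ∀ i ∈ Finset.Icc 1 N, ∀ t ∈ Set.Icc (x (i - 1)) (x i),
      fα t = f t + α i * (fα (Linv x N i t) - b (Linv x N i t)))
    (hselfβ : ∀ i ∈ Finset.Icc 1 N, ∀ t ∈ Set.Icc (x (i - 1)) (x i),
      fβ t = f t + β i * (fβ (Linv x N i t) - b (Linv x N i t))) :
    ∫ t in (x 0)..(x N), fα t = ∫ t in (x 0)..(x N), fβ t := by
  have hx := strictMonoOn_of_uniform hlt huni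
  have hIα := integral_eq_add_mul_of_selfAffine hx hf hb hfα α hselfα
  have hIβ := integral_eq_add_mul_of_selfAffine hx hf hb hfβ β hselfβ
  rw [sum_mul_aCoef_of_uniform hlt huni, hsum, ← sum_mul_aCoef_of_uniform hlt huni] at hIα
  set lam := ∑ i ∈ Icc 1 N, β i * aCoef x N i
  have hlam : 1 - lam ≠ 0 :=
    sub_ne_zero.2 ((le_abs_self lam).trans_lt (abs_sum_mul_aCoef_lt_one hx hN hβ)).ne'
  have hdiff : (1 - lam) * ((∫ t in x 0..x N, fα t) - ∫ t in x 0..x N, fβ t) = 0 := by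
    linear_combination hIα - hIβ
  exact sub_eq_zero.1 ((mul_eq_zero.1 hdiff).resolve_left hlam)

theorem integral_eq_of_sum_scales_eq (N : ℕ) (hN : 1 ≤ N) (x : ℕ → ℝ)
    (hlt : x 0 < x N)
    (huni : ∀ i ≤ N, x i = x 0 + i * ((x N - x 0) / N))
    (f b fα fβ : ℝ → ℝ)
    (hf : ContinuousOn f (Set.Icc (x 0) (x N)))
    (hb : ContinuousOn b (Set.Icc (x 0) (x N)))
    (hfα : ContinuousOn fα (Set.Icc (x 0) (x N)))
    (hfβ : ContinuousOn fβ (Set.Icc (x 0) (x N)))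
    (hb0 : b (x 0) = f (x 0)) (hbN : b (x N) = f (x N))
    (α β : ℕ → ℝ)
    (hα : ∀ i ∈ Finset.Icc 1 N, |α i| < 1)
    (hβ : ∀ i ∈ Finset.Icc 1 N, |β i| < 1)
    (hsum : ∑ i ∈ Finset.Icc 1 N, α i = ∑ i ∈ Finset.Icc 1 N, β i)
    (hselfα : ∀ i ∈ Finset.Icc 1 N, ∀ t ∈ Set.Icc (x (i - 1)) (x i),
      fα t = f t + α i * (fα (Linv x N i t) - b (Linv x N i t)))
    (hselfβ : ∀ i ∈ Finset.Icc 1 N, ∀ t ∈ Set.Icc (x (i - 1)) (x i),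
      fβ t = f t + β i * (fβ (Linv x N i t) - b (Linv x N i t))) :
    ∫ t in (x 0)..(x N), fα t = ∫ t in (x 0)..(x N), fβ t :=
  integral_eq_of_sum_scales_eq_general N hN x hlt huni f b fα fβ hf hb hfα hfβ α β hβ hsum hselfα
    hselfβ
end

section
/- With the setup of the flipped α-fractal function: let f^α be the α-fractal function of continuous f : [x₀,x_N] → ℝ with base b (agreeing with f at the endpoints), partition x₀ < ... < x_N and scale vector α with |α_i| < 1 and λ = Σ a_i α_i ≠ 1, and let f_F^{α_F} be the flipped α-fractal function on [−x_N, −x₀] built from f_F(x) = f(−x), b_F(x) = b(−x), the reversed partition, and reversed scale vector α_F = (α_N,...,α₁). Then ∫_{−x_N}^{−x₀} f_F^{α_F}(x) dx = ∫_{x₀}^{x_N} f^α(x) dx. -/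
/-- The flipped affine map `(L_F) i t = aCoef (N+1-i) * t - eCoef (N+1-i)`,
sending `[-x N, -x 0]` onto `[-x (N+1-i), -x (N-i)]`. -/
noncomputable def LF (x : ℕ → ℝ) (N i : ℕ) (t : ℝ) : ℝ :=
  aCoef x N (N + 1 - i) * t - eCoef x N (N + 1 - i)

/-- Inverse of the flipped affine map `LF`. -/
noncomputable def LFinv (x : ℕ → ℝ) (N i : ℕ) (t : ℝ) : ℝ :=
  (t + eCoef x N (N + 1 - i)) / aCoef x N (N + 1 - i)

open Finset intervalIntegral

section SelfReferential

variable {N : ℕ} {y : ℕ → ℝ}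

theorem Icc_succ_subset_Icc_zero (hy : ∀ i, i < N → y i < y (i + 1)) {k : ℕ} (hk : k < N) :
    Set.Icc (y k) (y (k + 1)) ⊆ Set.Icc (y 0) (y N) :=
  have hmono := (strictMonoOn_Iic_of_lt_succ hy).monotoneOn
  Set.Icc_subset_Icc (hmono (Set.mem_Iic.2 N.zero_le) (Set.mem_Iic.2 hk.le) k.zero_le)
    (hmono (Set.mem_Iic.2 hk) (Set.mem_Iic.2 le_rfl) hk)

theorem zero_lt_self_of_lt_succ (hy : ∀ i, i < N → y i < y (i + 1)) (hN : 0 < N) :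
    y 0 < y N :=
  strictMonoOn_Iic_of_lt_succ hy (Set.mem_Iic.2 N.zero_le) (Set.mem_Iic.2 le_rfl) hN

theorem aCoef_succ_ne_zero {k : ℕ} (hk : y k ≠ y (k + 1)) (h0N : y 0 ≠ y N) :
    aCoef y N (k + 1) ≠ 0 := by
  rw [aCoef, Nat.add_sub_cancel]
  exact div_ne_zero (sub_ne_zero.mpr hk.symm) (sub_ne_zero.mpr h0N.symm)

theorem aCoef_succ_pos (hy : ∀ i, i < N → y i < y (i + 1)) {k : ℕ} (hk : k < N) :
    0 < aCoef y N (k + 1) := by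
  rw [aCoef, Nat.add_sub_cancel]
  exact div_pos (sub_pos.mpr (hy k hk))
    (sub_pos.mpr (zero_lt_self_of_lt_succ hy (k.zero_le.trans_lt hk)))

theorem Linv_succ_left {k : ℕ} (hk : y k ≠ y (k + 1)) (h0N : y 0 ≠ y N) :
    Linv y N (k + 1) (y k) = y 0 := by
  rw [Linv, eCoef, aCoef, Nat.add_sub_cancel]
  field_simp [sub_ne_zero.mpr hk.symm, sub_ne_zero.mpr h0N.symm]
  ring

theorem Linv_succ_right {k : ℕ} (hk : y k ≠ y (k + 1)) (h0N : y 0 ≠ y N) :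
    Linv y N (k + 1) (y (k + 1)) = y N := by
  rw [Linv, eCoef, aCoef, Nat.add_sub_cancel]
  field_simp [sub_ne_zero.mpr hk.symm, sub_ne_zero.mpr h0N.symm]
  ring

theorem integral_comp_Linv_succ (H : ℝ → ℝ) {k : ℕ} (hk : y k ≠ y (k + 1))
    (h0N : y 0 ≠ y N) :
    ∫ t in y k..y (k + 1), H (Linv y N (k + 1) t) =
      aCoef y N (k + 1) * ∫ t in y 0..y N, H t := by
  have hL : ∀ t, Linv y N (k + 1) t =
      t / aCoef y N (k + 1) - eCoef y N (k + 1) / aCoef y N (k + 1) :=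
    fun t => sub_div _ _ _
  simp only [hL]
  rw [integral_comp_div_sub H (aCoef_succ_ne_zero hk h0N), smul_eq_mul, ← hL, ← hL,
    Linv_succ_left hk h0N, Linv_succ_right hk h0N]

theorem integral_piece_eq_of_selfReferential {F base g : ℝ → ℝ} {β : ℕ → ℝ}
    (hy : ∀ i, i < N → y i < y (i + 1))
    (hF : ContinuousOn F (Set.Icc (y 0) (y N)))
    (hbase : ContinuousOn base (Set.Icc (y 0) (y N)))
    (hg : ContinuousOn g (Set.Icc (y 0) (y N)))
    {k : ℕ} (hk : k < N)
    (hself : ∀ t ∈ Set.Icc (y k) (y (k + 1)),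
      g t = F t + β (k + 1) * (g (Linv y N (k + 1) t) - base (Linv y N (k + 1) t))) :
    ∫ t in y k..y (k + 1), g t =
      (∫ t in y k..y (k + 1), F t) +
        aCoef y N (k + 1) * β (k + 1) *
          ((∫ t in y 0..y N, g t) - ∫ t in y 0..y N, base t) := by
  have hsub := Icc_succ_subset_Icc_zero hy hk
  have hkk := (hy k hk).le
  have h0N := zero_lt_self_of_lt_succ hy (k.zero_le.trans_lt hk)
  have hmaps : Set.MapsTo (Linv y N (k + 1)) (Set.Icc (y k) (y (k + 1)))
      (Set.Icc (y 0) (y N)) := by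
    intro t ht
    have ha := aCoef_succ_pos hy hk
    rw [← Linv_succ_left (hy k hk).ne h0N.ne, ← Linv_succ_right (hy k hk).ne h0N.ne]
    exact ⟨by unfold Linv; gcongr; exact ht.1, by unfold Linv; gcongr; exact ht.2⟩
  have hLc : ContinuousOn (Linv y N (k + 1)) (Set.Icc (y k) (y (k + 1))) := by
    unfold Linv; fun_prop
  have hcomp : ContinuousOn
      (fun t => g (Linv y N (k + 1) t) - base (Linv y N (k + 1) t))
      (Set.Icc (y k) (y (k + 1))) :=
    (hg.comp hLc hmaps).sub (hbase.comp hLc hmaps)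
  rw [integral_congr (by rwa [Set.uIcc_of_le hkk]),
    integral_add ((hF.mono hsub).intervalIntegrable_of_Icc hkk)
      ((hcomp.intervalIntegrable_of_Icc hkk).const_mul _),
    integral_const_mul,
    integral_comp_Linv_succ (fun u => g u - base u) (hy k hk).ne h0N.ne,
    integral_sub (hg.intervalIntegrable_of_Icc h0N.le) (hbase.intervalIntegrable_of_Icc h0N.le)]
  ring

theorem integral_eq_of_selfReferential {F base g : ℝ → ℝ} {β : ℕ → ℝ}
    (hy : ∀ i, i < N → y i < y (i + 1))
    (hF : ContinuousOn F (Set.Icc (y 0) (y N)))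
    (hbase : ContinuousOn base (Set.Icc (y 0) (y N)))
    (hg : ContinuousOn g (Set.Icc (y 0) (y N)))
    (hself : ∀ i ∈ Icc 1 N, ∀ t ∈ Set.Icc (y (i - 1)) (y i),
      g t = F t + β i * (g (Linv y N i t) - base (Linv y N i t))) :
    ∫ t in y 0..y N, g t =
      (∫ t in y 0..y N, F t) +
        (∑ i ∈ Icc 1 N, aCoef y N i * β i) *
          ((∫ t in y 0..y N, g t) - ∫ t in y 0..y N, base t) := by
  have hreindex : ∀ h : ℕ → ℝ, ∑ i ∈ Icc 1 N, h i = ∑ k ∈ range N, h (k + 1) := by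
    intro h
    rw [range_eq_Ico, sum_Ico_add' h 0 N 1]; rfl
  have hint : ∀ {h : ℝ → ℝ}, ContinuousOn h (Set.Icc (y 0) (y N)) →
      ∀ k < N, IntervalIntegrable h MeasureTheory.volume (y k) (y (k + 1)) :=
    fun hh k hk =>
      (hh.mono (Icc_succ_subset_Icc_zero hy hk)).intervalIntegrable_of_Icc (hy k hk).le
  calc ∫ t in y 0..y N, g t
      = ∑ k ∈ range N, ∫ t in y k..y (k + 1), g t :=
        (sum_integral_adjacent_intervals (hint hg)).symm
    _ = ∑ k ∈ range N, ((∫ t in y k..y (k + 1), F t) + aCoef y N (k + 1) * β (k + 1) *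
          ((∫ t in y 0..y N, g t) - ∫ t in y 0..y N, base t)) :=
        sum_congr rfl fun k hk => integral_piece_eq_of_selfReferential hy hF hbase hg
          (mem_range.mp hk) fun t ht =>
            hself (k + 1) (mem_Icc.mpr ⟨k.succ_pos, mem_range.mp hk⟩) t (by simpa using ht)
    _ = _ := by
        rw [sum_add_distrib, ← sum_mul, sum_integral_adjacent_intervals (hint hF), hreindex]

end SelfReferential

theorem ContinuousOn.comp_neg_Icc {β : Type*} [TopologicalSpace β] {f : ℝ → β} {a b : ℝ}
    (hf : ContinuousOn f (Set.Icc a b)) : ContinuousOn (fun t => f (-t)) (Set.Icc (-b) (-a)) :=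
  hf.comp continuous_neg.continuousOn fun _ ht => ⟨le_neg_of_le_neg ht.2, neg_le_of_neg_le ht.1⟩

theorem sum_Icc_one_reflect {M : Type*} [AddCommMonoid M] (N : ℕ) (h : ℕ → M) :
    ∑ i ∈ Icc 1 N, h (N + 1 - i) = ∑ i ∈ Icc 1 N, h i :=
  sum_nbij' (fun i => N + 1 - i) (fun i => N + 1 - i)
    (fun i hi => by simp only [mem_Icc] at hi ⊢; omega)
    (fun i hi => by simp only [mem_Icc] at hi ⊢; omega)
    (fun i hi => by simp only [mem_Icc] at hi; omega)
    (fun i hi => by simp only [mem_Icc] at hi; omega)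
    fun _ _ => rfl

def flipPartition (x : ℕ → ℝ) (N j : ℕ) : ℝ := -x (N - j)

section FlipPartition

variable {x : ℕ → ℝ} {N : ℕ}

@[simp] theorem flipPartition_zero : flipPartition x N 0 = -x N := rfl

@[simp] theorem flipPartition_self : flipPartition x N N = -x 0 := by
  simp [flipPartition]

theorem flipPartition_sub_one {i : ℕ} (hi : 1 ≤ i) :
    flipPartition x N (i - 1) = -x (N + 1 - i) := by
  rw [flipPartition, show N - (i - 1) = N + 1 - i by omega]

theorem flipPartition_lt_succ (hx : ∀ i, i < N → x i < x (i + 1)) :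
    ∀ i, i < N → flipPartition x N i < flipPartition x N (i + 1) := by
  intro i hi
  have h := hx (N - (i + 1)) (by omega)
  rw [show N - (i + 1) + 1 = N - i by omega] at h
  exact neg_lt_neg h

theorem aCoef_flipPartition {i : ℕ} (hi : i ∈ Icc 1 N) :
    aCoef (flipPartition x N) N i = aCoef x N (N + 1 - i) := by
  obtain ⟨h1, h2⟩ := mem_Icc.mp hi
  simp only [aCoef, flipPartition_sub_one h1, flipPartition_self, flipPartition_zero]
  rw [flipPartition, show N + 1 - i - 1 = N - i by omega]
  congr 1 <;> ring

theorem eCoef_flipPartition {i : ℕ} (hi : i ∈ Icc 1 N) :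
    eCoef (flipPartition x N) N i = -eCoef x N (N + 1 - i) := by
  obtain ⟨h1, h2⟩ := mem_Icc.mp hi
  simp only [eCoef, flipPartition_sub_one h1, flipPartition_self, flipPartition_zero]
  rw [flipPartition, show N + 1 - i - 1 = N - i by omega, ← neg_div]
  congr 1 <;> ring

theorem Linv_flipPartition {i : ℕ} (hi : i ∈ Icc 1 N) :
    Linv (flipPartition x N) N i = LFinv x N i := by
  ext t
  rw [Linv, LFinv, aCoef_flipPartition hi, eCoef_flipPartition hi, sub_neg_eq_add]

theorem sum_aCoef_flipPartition_mul (α : ℕ → ℝ) :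
    ∑ i ∈ Icc 1 N, aCoef (flipPartition x N) N i * α (N + 1 - i) =
      ∑ i ∈ Icc 1 N, aCoef x N i * α i := by
  rw [sum_congr rfl fun i hi => by rw [aCoef_flipPartition hi]]
  exact sum_Icc_one_reflect N fun i => aCoef x N i * α i

end FlipPartition

theorem integral_flipped_fractal_general (N : ℕ) (x : ℕ → ℝ)
    (hx : ∀ i, i < N → x i < x (i + 1))
    (f b : ℝ → ℝ)
    (hf : ContinuousOn f (Set.Icc (x 0) (x N)))
    (hb : ContinuousOn b (Set.Icc (x 0) (x N)))
    (α : ℕ → ℝ)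
    (fα : ℝ → ℝ) (hfα : ContinuousOn fα (Set.Icc (x 0) (x N)))
    (hself : ∀ i ∈ Finset.Icc 1 N, ∀ t ∈ Set.Icc (x (i - 1)) (x i),
      fα t = f t + α i * (fα (Linv x N i t) - b (Linv x N i t)))
    (fF : ℝ → ℝ) (hfF : ContinuousOn fF (Set.Icc (-x N) (-x 0)))
    (hselfF : ∀ i ∈ Finset.Icc 1 N, ∀ t ∈ Set.Icc (-x (N + 1 - i)) (-x (N - i)),
      fF t = f (-t) +
        α (N + 1 - i) * (fF (LFinv x N i t) - b (-(LFinv x N i t))))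
    (Λ : ℝ) (hΛdef : Λ = ∑ i ∈ Finset.Icc 1 N, aCoef x N i * α i)
    (hΛ : Λ ≠ 1) :
    ∫ t in (-x N)..(-x 0), fF t = ∫ t in (x 0)..(x N), fα t := by
  have horig := integral_eq_of_selfReferential hx hf hb hfα hself
  have hflip := integral_eq_of_selfReferential (flipPartition_lt_succ hx)
    (F := fun t => f (-t)) (base := fun t => b (-t)) (g := fF) (β := fun i => α (N + 1 - i))
    (by simpa using hf.comp_neg_Icc) (by simpa using hb.comp_neg_Icc) (by simpa using hfF)
    fun i hi t ht => by
      rw [Linv_flipPartition hi]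
      exact hselfF i hi t (by rwa [flipPartition_sub_one (mem_Icc.mp hi).1] at ht)
  rw [flipPartition_zero, flipPartition_self, sum_aCoef_flipPartition_mul, ← hΛdef,
    integral_comp_neg, integral_comp_neg, neg_neg, neg_neg] at hflip
  rw [← hΛdef] at horig
  have hsolve :
      (1 - Λ) * ((∫ t in (-x N)..(-x 0), fF t) - ∫ t in (x 0)..(x N), fα t) = 0 := by
    linear_combination hflip - horig
  exact sub_eq_zero.mp ((mul_eq_zero.mp hsolve).resolve_left (sub_ne_zero.mpr hΛ.symm))

theorem integral_flipped_fractal (N : ℕ) (hN : 1 ≤ N) (x : ℕ → ℝ)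
    (hx : ∀ i, i < N → x i < x (i + 1))
    (f b : ℝ → ℝ)
    (hf : ContinuousOn f (Set.Icc (x 0) (x N)))
    (hb : ContinuousOn b (Set.Icc (x 0) (x N)))
    (hb0 : b (x 0) = f (x 0)) (hbN : b (x N) = f (x N))
    (α : ℕ → ℝ) (hα : ∀ i ∈ Finset.Icc 1 N, |α i| < 1)
    (fα : ℝ → ℝ) (hfα : ContinuousOn fα (Set.Icc (x 0) (x N)))
    (hself : ∀ i ∈ Finset.Icc 1 N, ∀ t ∈ Set.Icc (x (i - 1)) (x i),
      fα t = f t + α i * (fα (Linv x N i t) - b (Linv x N i t)))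
    (fF : ℝ → ℝ) (hfF : ContinuousOn fF (Set.Icc (-x N) (-x 0)))
    (hselfF : ∀ i ∈ Finset.Icc 1 N, ∀ t ∈ Set.Icc (-x (N + 1 - i)) (-x (N - i)),
      fF t = f (-t) +
        α (N + 1 - i) * (fF (LFinv x N i t) - b (-(LFinv x N i t))))
    (Λ : ℝ) (hΛdef : Λ = ∑ i ∈ Finset.Icc 1 N, aCoef x N i * α i)
    (hΛ : Λ ≠ 1) :
    ∫ t in (-x N)..(-x 0), fF t = ∫ t in (x 0)..(x N), fα t :=
  integral_flipped_fractal_general N x hx f b hf hb α fα hfα hself fF hfF hselfF Λ hΛdef hΛ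
end

section
/- Let f^α be the α-fractal function of continuous f : I = [x₀,x_N] → ℝ with base b (agreeing with f at the endpoints), partition x₀ < ... < x_N, and scale vector α with |α|_∞ = max_i |α_i| < 1. Then ‖f^α − f‖_∞ ≤ (|α|_∞ / (1 − |α|_∞)) ‖f − b‖_∞, where ‖·‖_∞ is the sup norm on C(I). -/
/-!
On the `i`-th subinterval the self-referential equation gives
`fα t - f t = α i * (fα s - b s)` with `s = Linv x N i t ∈ [x 0, x N]`, so with
`D = sup |fα - f|` and `E = sup |f - b|` we get `D ≤ |α|_∞ (D + E)`; since `|α|_∞ < 1` this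
rearranges to `D ≤ |α|_∞ / (1 - |α|_∞) * E`.
-/

open Set

theorem Icc_subset_biUnion_Icc {X : Type*} [LinearOrder X] (N : ℕ) (a : ℕ → X) :
    Icc (a 0) (a (N + 1)) ⊆ ⋃ i ∈ Finset.range (N + 1), Icc (a i) (a (i + 1)) := by
  induction N with
  | zero => simp
  | succ N ih => calc
    _ ⊆ Icc (a 0) (a (N + 1)) ∪ Icc (a (N + 1)) (a (N + 2)) := Icc_subset_Icc_union_Icc
    _ ⊆ _ := by simpa [Finset.range_add_one] using
                  union_subset_union_right (Icc (a (N + 1)) (a (N + 2))) ih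

theorem le_div_one_sub_mul_of_le_mul_add {A D E : ℝ} (hA : A < 1) (h : D ≤ A * (D + E)) :
    D ≤ A / (1 - A) * E := by
  rw [div_mul_eq_mul_div, le_div_iff₀ (sub_pos.mpr hA)]
  linarith

theorem forall_le_div_one_sub_mul_of_le_mul_sSup_add {ι : Type*} {g : ι → ℝ} {S : Set ι}
    {A E : ℝ} (hg : BddAbove (g '' S)) (hA : A < 1)
    (h : ∀ t ∈ S, g t ≤ A * (sSup (g '' S) + E)) : ∀ t ∈ S, g t ≤ A / (1 - A) * E := by
  intro t ht
  have hsup : sSup (g '' S) ≤ A * (sSup (g '' S) + E) :=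
    csSup_le ⟨g t, t, ht, rfl⟩ (forall_mem_image.mpr h)
  exact (le_csSup hg ⟨t, ht, rfl⟩).trans (le_div_one_sub_mul_of_le_mul_add hA hsup)

section Partition

variable {x : ℕ → ℝ} {N : ℕ}

theorem exists_mem_Icc_pred_of_mem_Icc (hN : 1 ≤ N) {t : ℝ} (ht : t ∈ Icc (x 0) (x N)) :
    ∃ i ∈ Finset.Icc 1 N, t ∈ Icc (x (i - 1)) (x i) := by
  obtain ⟨n, rfl⟩ := Nat.exists_eq_add_of_le' hN
  obtain ⟨i, hi, hti⟩ := mem_iUnion₂.mp (Icc_subset_biUnion_Icc n x ht)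
  exact ⟨i + 1, by simp only [Finset.mem_range, Finset.mem_Icc] at hi ⊢; omega, by simpa using hti⟩

theorem partition_first_lt_last (hx : ∀ i, i < N → x i < x (i + 1)) (hN : 1 ≤ N) :
    x 0 < x N :=
  strictMonoOn_Iic_of_lt_succ (fun m hm => by simpa using hx m hm)
    (mem_Iic.mpr (Nat.zero_le N)) (mem_Iic.mpr le_rfl) hN

theorem partition_pred_lt (hx : ∀ i, i < N → x i < x (i + 1)) {i : ℕ}
    (hi : i ∈ Finset.Icc 1 N) : x (i - 1) < x i := by
  rw [Finset.mem_Icc] at hi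
  simpa [Nat.sub_add_cancel hi.1] using hx (i - 1) (by omega)

end Partition

theorem Linv_eq {x : ℕ → ℝ} {N i : ℕ} (h0N : x 0 < x N) (hi : x (i - 1) < x i) (t : ℝ) :
    Linv x N i t = x 0 + (t - x (i - 1)) / (x i - x (i - 1)) * (x N - x 0) := by
  have h₁ : x N - x 0 ≠ 0 := (sub_pos.mpr h0N).ne'
  have h₂ : x i - x (i - 1) ≠ 0 := (sub_pos.mpr hi).ne'
  rw [Linv, aCoef, eCoef]
  field_simp
  ring

theorem Linv_mem_Icc {x : ℕ → ℝ} {N i : ℕ} (h0N : x 0 < x N) (hi : x (i - 1) < x i) {t : ℝ}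
    (ht : t ∈ Icc (x (i - 1)) (x i)) : Linv x N i t ∈ Icc (x 0) (x N) := by
  have hu₀ : 0 ≤ (t - x (i - 1)) / (x i - x (i - 1)) :=
    div_nonneg (sub_nonneg.mpr ht.1) (sub_pos.mpr hi).le
  have hu₁ : (t - x (i - 1)) / (x i - x (i - 1)) ≤ 1 :=
    (div_le_one (sub_pos.mpr hi)).mpr (by linarith [ht.2])
  rw [Linv_eq h0N hi]
  constructor <;> nlinarith

theorem fractal_perturbation_bound_general (N : ℕ) (x : ℕ → ℝ)
    (hx : ∀ i, i < N → x i < x (i + 1))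
    (f b : ℝ → ℝ)
    (hf : ContinuousOn f (Set.Icc (x 0) (x N)))
    (hb : ContinuousOn b (Set.Icc (x 0) (x N)))
    (α : ℕ → ℝ) (hα : ∀ i ∈ Finset.Icc 1 N, |α i| < 1)
    (hne : (Finset.Icc 1 N).Nonempty)
    (fα : ℝ → ℝ) (hfα : ContinuousOn fα (Set.Icc (x 0) (x N)))
    (hself : ∀ i ∈ Finset.Icc 1 N, ∀ t ∈ Set.Icc (x (i - 1)) (x i),
      fα t = f t + α i * (fα (Linv x N i t) - b (Linv x N i t))) :
    ∀ t ∈ Set.Icc (x 0) (x N),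
      |fα t - f t| ≤
        ((Finset.Icc 1 N).sup' hne (fun i => |α i|) /
            (1 - (Finset.Icc 1 N).sup' hne (fun i => |α i|))) *
          sSup ((fun s => |f s - b s|) '' Set.Icc (x 0) (x N)) := by
  have hN : 1 ≤ N := Finset.nonempty_Icc.mp hne
  set A := (Finset.Icc 1 N).sup' hne (fun i => |α i|)
  have hE := (isCompact_Icc.image_of_continuousOn (hf.sub hb).abs).bddAbove
  have hD := (isCompact_Icc.image_of_continuousOn (hfα.sub hf).abs).bddAbove
  refine forall_le_div_one_sub_mul_of_le_mul_sSup_add hD ((Finset.sup'_lt_iff _).mpr hα)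
    fun t ht => ?_
  obtain ⟨i, hi, hti⟩ := exists_mem_Icc_pred_of_mem_Icc hN ht
  set s := Linv x N i t
  have hs : s ∈ Icc (x 0) (x N) :=
    Linv_mem_Icc (partition_first_lt_last hx hN) (partition_pred_lt hx hi) hti
  have hαi : |α i| ≤ A := Finset.le_sup' (fun i => |α i|) hi
  calc |fα t - f t| = |α i| * |(fα s - f s) + (f s - b s)| := by
        rw [hself i hi t hti, sub_add_sub_cancel, ← abs_mul, add_sub_cancel_left]
    _ ≤ A * (|fα s - f s| + |f s - b s|) :=
        mul_le_mul hαi (abs_add_le _ _) (abs_nonneg _) ((abs_nonneg _).trans hαi)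
    _ ≤ A * (sSup ((fun s => |fα s - f s|) '' Icc (x 0) (x N)) +
          sSup ((fun s => |f s - b s|) '' Icc (x 0) (x N))) := by
        gcongr
        · exact (abs_nonneg _).trans hαi
        · exact le_csSup hD ⟨s, hs, rfl⟩
        · exact le_csSup hE ⟨s, hs, rfl⟩

theorem fractal_perturbation_bound (N : ℕ) (hN : 1 ≤ N) (x : ℕ → ℝ)
    (hx : ∀ i, i < N → x i < x (i + 1))
    (f b : ℝ → ℝ)
    (hf : ContinuousOn f (Set.Icc (x 0) (x N)))
    (hb : ContinuousOn b (Set.Icc (x 0) (x N)))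
    (hb0 : b (x 0) = f (x 0)) (hbN : b (x N) = f (x N))
    (α : ℕ → ℝ) (hα : ∀ i ∈ Finset.Icc 1 N, |α i| < 1)
    (hne : (Finset.Icc 1 N).Nonempty)
    (fα : ℝ → ℝ) (hfα : ContinuousOn fα (Set.Icc (x 0) (x N)))
    (hself : ∀ i ∈ Finset.Icc 1 N, ∀ t ∈ Set.Icc (x (i - 1)) (x i),
      fα t = f t + α i * (fα (Linv x N i t) - b (Linv x N i t))) :
    ∀ t ∈ Set.Icc (x 0) (x N),
      |fα t - f t| ≤
        ((Finset.Icc 1 N).sup' hne (fun i => |α i|) /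
            (1 - (Finset.Icc 1 N).sup' hne (fun i => |α i|))) *
          sSup ((fun s => |f s - b s|) '' Set.Icc (x 0) (x N)) :=
  fractal_perturbation_bound_general N x hx f b hf hb α hα hne fα hfα hself
end

section
/- Let f, b : [0,1] → ℝ be continuous with b(0) = f(0) and b(1) = f(1), and consider the uniform partition of [0,1] into N equal parts. For scale vectors α with all |α_i| < 1, set λ(α) = (1/N) Σ_{i=1}^N α_i. Then the map α ↦ ∫_0^1 f^α(x) dx, where f^α is the α-fractal function of f with base b, depends on α only through λ(α), equals (∫_0^1 f − λ ∫_0^1 b)/(1 − λ), and is a continuous (in fact real-analytic) function of λ on (−1, 1). -/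
/-!
On the `i`-th piece the substitution `x = N t - (i - 1)` turns `∫ α_i (f^α - b)(N t - (i - 1)) dt`
into `(α_i / N) ∫₀¹ (f^α - b)`. Summing over the pieces gives the linear equation
`∫ f^α = ∫ f + λ (∫ f^α - ∫ b)`, which is solvable because `λ < 1`.
-/

open MeasureTheory Finset

def IsFractalFunction (N : ℕ) (α : ℕ → ℝ) (f b u : ℝ → ℝ) : Prop :=
  ∀ i ∈ Icc 1 N, ∀ t ∈ Set.Icc (((i : ℝ) - 1) / N) ((i : ℝ) / N),
    u t = f t + α i * (u ((N : ℝ) * t - ((i : ℝ) - 1)) - b ((N : ℝ) * t - ((i : ℝ) - 1)))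

noncomputable def scaleMean (N : ℕ) (α : ℕ → ℝ) : ℝ :=
  (1 / (N : ℝ)) * ∑ i ∈ Icc 1 N, α i

theorem uIcc_uniform_piece_subset {N i : ℕ} (hi : i ∈ Icc 1 N) :
    Set.uIcc (((i : ℝ) - 1) / N) ((i : ℝ) / N) ⊆ Set.uIcc 0 1 := by
  obtain ⟨hi₁, hiN⟩ := mem_Icc.mp hi
  have hN : (0 : ℝ) < N := by exact_mod_cast hi₁.trans hiN
  have hi₁' : (1 : ℝ) ≤ i := by exact_mod_cast hi₁
  have hiN' : (i : ℝ) ≤ N := by exact_mod_cast hiN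
  rw [Set.uIcc_of_le zero_le_one]
  refine Set.uIcc_subset_Icc ⟨by positivity, ?_⟩ ⟨by positivity, ?_⟩ <;>
    rw [div_le_one hN] <;> linarith

theorem sum_integral_uniform_partition {N : ℕ} (hN : N ≠ 0) {g : ℝ → ℝ}
    (hg : IntervalIntegrable g volume 0 1) :
    ∑ i ∈ Icc 1 N, ∫ x in ((i : ℝ) - 1) / N..(i : ℝ) / N, g x = ∫ x in (0 : ℝ)..1, g x := by
  have := intervalIntegral.sum_integral_adjacent_intervals_Ico
    (a := fun k : ℕ => ((k : ℝ) - 1) / N) (m := 1) (n := N + 1) (by omega)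
    fun k hk => hg.mono_set <| by
      simpa using uIcc_uniform_piece_subset (N := N) (mem_Icc.mpr ⟨hk.1, Nat.lt_succ_iff.mp hk.2⟩)
  simpa [Finset.Ico_add_one_right_eq_Icc, hN] using this

theorem integral_comp_mul_sub_piece {c : ℝ} (hc : c ≠ 0) (a : ℝ) (g : ℝ → ℝ) :
    ∫ x in (a - 1) / c..a / c, g (c * x - (a - 1)) = c⁻¹ * ∫ x in (0 : ℝ)..1, g x := by
  rw [intervalIntegral.integral_comp_mul_sub g hc, smul_eq_mul]
  congr 2 <;> field_simp <;> ring

theorem integral_piece_eq_add_of_eqOn {c a s : ℝ} (hc : 0 < c) {u f g : ℝ → ℝ}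
    (hu : IntervalIntegrable u volume ((a - 1) / c) (a / c))
    (hf : IntervalIntegrable f volume ((a - 1) / c) (a / c))
    (h : ∀ x ∈ Set.Icc ((a - 1) / c) (a / c), u x = f x + s * g (c * x - (a - 1))) :
    ∫ x in (a - 1) / c..a / c, u x =
      (∫ x in (a - 1) / c..a / c, f x) + s * (c⁻¹ * ∫ x in (0 : ℝ)..1, g x) := by
  have hle : (a - 1) / c ≤ a / c := by gcongr; linarith
  have hdiff : ∫ x in (a - 1) / c..a / c, (u x - f x) =
      ∫ x in (a - 1) / c..a / c, s * g (c * x - (a - 1)) :=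
    intervalIntegral.integral_congr fun x hx => by
      rw [Set.uIcc_of_le hle] at hx
      simp only [h x hx, add_sub_cancel_left]
  rw [intervalIntegral.integral_sub hu hf, intervalIntegral.integral_const_mul,
    integral_comp_mul_sub_piece hc.ne'] at hdiff
  linarith

section Fractal

variable {N : ℕ} {α : ℕ → ℝ} {f b u : ℝ → ℝ}

theorem scaleMean_lt_one (hN : 1 ≤ N) (hα : ∀ i ∈ Icc 1 N, |α i| < 1) : scaleMean N α < 1 := by
  have hsum : ∑ i ∈ Icc 1 N, α i < N :=
    calc ∑ i ∈ Icc 1 N, α i < ∑ i ∈ Icc 1 N, (1 : ℝ) :=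
          sum_lt_sum_of_nonempty (nonempty_Icc.mpr hN) fun i hi => (abs_lt.mp (hα i hi)).2
      _ = N := by simp
  rwa [scaleMean, one_div_mul_eq_div, div_lt_one (by exact_mod_cast hN)]

theorem IsFractalFunction.integral_eq_add (hN : N ≠ 0) (hu : IntervalIntegrable u volume 0 1)
    (hf : IntervalIntegrable f volume 0 1) (hb : IntervalIntegrable b volume 0 1)
    (h : IsFractalFunction N α f b u) :
    ∫ t in (0 : ℝ)..1, u t = (∫ t in (0 : ℝ)..1, f t) +
      scaleMean N α * ((∫ t in (0 : ℝ)..1, u t) - ∫ t in (0 : ℝ)..1, b t) := by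
  have hN' : (0 : ℝ) < N := by positivity
  calc ∫ t in (0 : ℝ)..1, u t = ∑ i ∈ Icc 1 N, ∫ t in ((i : ℝ) - 1) / N..(i : ℝ) / N, u t :=
        (sum_integral_uniform_partition hN hu).symm
    _ = ∑ i ∈ Icc 1 N, ((∫ t in ((i : ℝ) - 1) / N..(i : ℝ) / N, f t) +
          α i * ((N : ℝ)⁻¹ * ∫ t in (0 : ℝ)..1, (u t - b t))) :=
        sum_congr rfl fun i hi => integral_piece_eq_add_of_eqOn hN'
          (hu.mono_set (uIcc_uniform_piece_subset hi))
          (hf.mono_set (uIcc_uniform_piece_subset hi)) (h i hi)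
    _ = _ := by
        rw [sum_add_distrib, sum_integral_uniform_partition hN hf, ← sum_mul,
          intervalIntegral.integral_sub hu hb, scaleMean]
        ring

theorem IsFractalFunction.integral_eq_div (hN : 1 ≤ N) (hα : ∀ i ∈ Icc 1 N, |α i| < 1)
    (hu : IntervalIntegrable u volume 0 1) (hf : IntervalIntegrable f volume 0 1)
    (hb : IntervalIntegrable b volume 0 1) (h : IsFractalFunction N α f b u) :
    ∫ t in (0 : ℝ)..1, u t =
      ((∫ t in (0 : ℝ)..1, f t) - scaleMean N α * ∫ t in (0 : ℝ)..1, b t) /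
        (1 - scaleMean N α) := by
  rw [eq_div_iff (sub_pos.mpr (scaleMean_lt_one hN hα)).ne']
  linear_combination h.integral_eq_add (by omega) hu hf hb

end Fractal

theorem analyticOnNhd_sub_mul_div_one_sub (F B : ℝ) {s : Set ℝ} (hs : 1 ∉ s) :
    AnalyticOnNhd ℝ (fun l : ℝ => (F - l * B) / (1 - l)) s :=
  (analyticOnNhd_const.sub (analyticOnNhd_id.mul analyticOnNhd_const)).div
    (analyticOnNhd_const.sub analyticOnNhd_id) fun l hl h => hs (by rwa [← sub_eq_zero.mp h] at hl)

theorem integral_depends_only_on_lambda_general (N : ℕ) (hN : 1 ≤ N)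
    (f b : ℝ → ℝ)
    (hf : ContinuousOn f (Set.Icc 0 1))
    (hb : ContinuousOn b (Set.Icc 0 1)) :
    -- (1) the integral of `f^α` is given by a formula in `λ(α) = (1/N) ∑ α i`
    (∀ α : ℕ → ℝ, (∀ i ∈ Finset.Icc 1 N, |α i| < 1) →
      ∀ fα : ℝ → ℝ, ContinuousOn fα (Set.Icc 0 1) →
        (∀ i ∈ Finset.Icc 1 N, ∀ t ∈ Set.Icc (((i : ℝ) - 1) / N) ((i : ℝ) / N),
          fα t = f t + α i * (fα ((N : ℝ) * t - ((i : ℝ) - 1)) -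
            b ((N : ℝ) * t - ((i : ℝ) - 1)))) →
        ∫ t in (0 : ℝ)..1, fα t =
          ((∫ t in (0 : ℝ)..1, f t) -
              ((1 / (N : ℝ)) * ∑ i ∈ Finset.Icc 1 N, α i) * ∫ t in (0 : ℝ)..1, b t) /
            (1 - (1 / (N : ℝ)) * ∑ i ∈ Finset.Icc 1 N, α i)) ∧
    -- (2) hence it depends on `α` only through `λ(α)`
    (∀ α β : ℕ → ℝ, (∀ i ∈ Finset.Icc 1 N, |α i| < 1) →
      (∀ i ∈ Finset.Icc 1 N, |β i| < 1) →
      (∑ i ∈ Finset.Icc 1 N, α i) = (∑ i ∈ Finset.Icc 1 N, β i) →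
      ∀ fα fβ : ℝ → ℝ, ContinuousOn fα (Set.Icc 0 1) → ContinuousOn fβ (Set.Icc 0 1) →
        (∀ i ∈ Finset.Icc 1 N, ∀ t ∈ Set.Icc (((i : ℝ) - 1) / N) ((i : ℝ) / N),
          fα t = f t + α i * (fα ((N : ℝ) * t - ((i : ℝ) - 1)) -
            b ((N : ℝ) * t - ((i : ℝ) - 1)))) →
        (∀ i ∈ Finset.Icc 1 N, ∀ t ∈ Set.Icc (((i : ℝ) - 1) / N) ((i : ℝ) / N),
          fβ t = f t + β i * (fβ ((N : ℝ) * t - ((i : ℝ) - 1)) -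
            b ((N : ℝ) * t - ((i : ℝ) - 1)))) →
        ∫ t in (0 : ℝ)..1, fα t = ∫ t in (0 : ℝ)..1, fβ t) ∧
    -- (3) the formula is continuous, indeed real-analytic, in `λ` on `(-1, 1)`
    ContinuousOn
      (fun l : ℝ => ((∫ t in (0 : ℝ)..1, f t) - l * ∫ t in (0 : ℝ)..1, b t) / (1 - l))
      (Set.Ioo (-1) 1) ∧
    AnalyticOnNhd ℝ
      (fun l : ℝ => ((∫ t in (0 : ℝ)..1, f t) - l * ∫ t in (0 : ℝ)..1, b t) / (1 - l))
      (Set.Ioo (-1) 1) := by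
  have hformula : ∀ α : ℕ → ℝ, (∀ i ∈ Icc 1 N, |α i| < 1) → ∀ u : ℝ → ℝ,
      ContinuousOn u (Set.Icc 0 1) → IsFractalFunction N α f b u →
      ∫ t in (0 : ℝ)..1, u t =
        ((∫ t in (0 : ℝ)..1, f t) - scaleMean N α * ∫ t in (0 : ℝ)..1, b t) /
          (1 - scaleMean N α) :=
    fun α hα u hu h => h.integral_eq_div hN hα (hu.intervalIntegrable_of_Icc zero_le_one)
      (hf.intervalIntegrable_of_Icc zero_le_one) (hb.intervalIntegrable_of_Icc zero_le_one)
  have hanalytic := analyticOnNhd_sub_mul_div_one_sub (∫ t in (0 : ℝ)..1, f t)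
    (∫ t in (0 : ℝ)..1, b t) (s := Set.Ioo (-1) 1) (by simp)
  refine ⟨hformula, fun α β hα hβ hsum fα fβ hfα hfβ hα' hβ' => ?_, hanalytic.continuousOn,
    hanalytic⟩
  rw [hformula α hα fα hfα hα', hformula β hβ fβ hfβ hβ']
  unfold scaleMean
  rw [hsum]

theorem integral_depends_only_on_lambda (N : ℕ) (hN : 1 ≤ N)
    (f b : ℝ → ℝ)
    (hf : ContinuousOn f (Set.Icc 0 1))
    (hb : ContinuousOn b (Set.Icc 0 1))
    (hb0 : b 0 = f 0) (hb1 : b 1 = f 1) :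
    -- (1) the integral of `f^α` is given by a formula in `λ(α) = (1/N) ∑ α i`
    (∀ α : ℕ → ℝ, (∀ i ∈ Finset.Icc 1 N, |α i| < 1) →
      ∀ fα : ℝ → ℝ, ContinuousOn fα (Set.Icc 0 1) →
        (∀ i ∈ Finset.Icc 1 N, ∀ t ∈ Set.Icc (((i : ℝ) - 1) / N) ((i : ℝ) / N),
          fα t = f t + α i * (fα ((N : ℝ) * t - ((i : ℝ) - 1)) -
            b ((N : ℝ) * t - ((i : ℝ) - 1)))) →
        ∫ t in (0 : ℝ)..1, fα t =
          ((∫ t in (0 : ℝ)..1, f t) -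
              ((1 / (N : ℝ)) * ∑ i ∈ Finset.Icc 1 N, α i) * ∫ t in (0 : ℝ)..1, b t) /
            (1 - (1 / (N : ℝ)) * ∑ i ∈ Finset.Icc 1 N, α i)) ∧
    -- (2) hence it depends on `α` only through `λ(α)`
    (∀ α β : ℕ → ℝ, (∀ i ∈ Finset.Icc 1 N, |α i| < 1) →
      (∀ i ∈ Finset.Icc 1 N, |β i| < 1) →
      (∑ i ∈ Finset.Icc 1 N, α i) = (∑ i ∈ Finset.Icc 1 N, β i) →
      ∀ fα fβ : ℝ → ℝ, ContinuousOn fα (Set.Icc 0 1) → ContinuousOn fβ (Set.Icc 0 1) →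
        (∀ i ∈ Finset.Icc 1 N, ∀ t ∈ Set.Icc (((i : ℝ) - 1) / N) ((i : ℝ) / N),
          fα t = f t + α i * (fα ((N : ℝ) * t - ((i : ℝ) - 1)) -
            b ((N : ℝ) * t - ((i : ℝ) - 1)))) →
        (∀ i ∈ Finset.Icc 1 N, ∀ t ∈ Set.Icc (((i : ℝ) - 1) / N) ((i : ℝ) / N),
          fβ t = f t + β i * (fβ ((N : ℝ) * t - ((i : ℝ) - 1)) -
            b ((N : ℝ) * t - ((i : ℝ) - 1)))) →
        ∫ t in (0 : ℝ)..1, fα t = ∫ t in (0 : ℝ)..1, fβ t) ∧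
    -- (3) the formula is continuous, indeed real-analytic, in `λ` on `(-1, 1)`
    ContinuousOn
      (fun l : ℝ => ((∫ t in (0 : ℝ)..1, f t) - l * ∫ t in (0 : ℝ)..1, b t) / (1 - l))
      (Set.Ioo (-1) 1) ∧
    AnalyticOnNhd ℝ
      (fun l : ℝ => ((∫ t in (0 : ℝ)..1, f t) - l * ∫ t in (0 : ℝ)..1, b t) / (1 - l))
      (Set.Ioo (-1) 1) :=
  integral_depends_only_on_lambda_general N hN f b hf hb
end
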